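/- There is an absolute constant c such that for all natural numbers n ≥ 1 and s with 1 ≤ s ≤ n, every function f : ({0,1}^n) × ({0,1}^n) → {0,1} that is computed by a space-s communication protocol is computed by a Boolean circuit with 2n inputs of size at most c · n · 2^(n + 2s). -/

import Mathlib

inductive GateLabel where
  | and | or | not
deriving DecidableEq

/-- A Boolean circuit with `m` inputs: a sequence of gates, each labeled ∧, ∨ (fan-in 2)
or ¬ (fan-in 1), taking inputs from among the `m` input variables and earlier gates
(wire `w < m` is input variable `w`; wire `m + g` is gate `g`); one gate is the output gate. -/
structure Circuit (m : ℕ) where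
  size : ℕ
  label : Fin size → GateLabel
  in1 : (g : Fin size) → Fin (m + g.val)
  in2 : (g : Fin size) → Fin (m + g.val)
  out : Fin size

namespace Circuit

/-- The value carried on wire `w` when the circuit is evaluated on input `x`. -/
def wire {m : ℕ} (C : Circuit m) (x : Fin m → Bool) (w : ℕ) (hw : w < m + C.size) : Bool :=
  if h : w < m then x ⟨w, h⟩
  else
    have hg : w - m < C.size := by omega
    have h1 : ((C.in1 ⟨w - m, hg⟩ : Fin _) : ℕ) < w := by
      have := (C.in1 ⟨w - m, hg⟩).isLt; simp only [Fin.val_mk] at this; omega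
    have h2 : ((C.in2 ⟨w - m, hg⟩ : Fin _) : ℕ) < w := by
      have := (C.in2 ⟨w - m, hg⟩).isLt; simp only [Fin.val_mk] at this; omega
    match C.label ⟨w - m, hg⟩ with
    | .not => !(C.wire x (C.in1 ⟨w - m, hg⟩) (by omega))
    | .and => (C.wire x (C.in1 ⟨w - m, hg⟩) (by omega)) && (C.wire x (C.in2 ⟨w - m, hg⟩) (by omega))
    | .or => (C.wire x (C.in1 ⟨w - m, hg⟩) (by omega)) || (C.wire x (C.in2 ⟨w - m, hg⟩) (by omega))
termination_by w

/-- The output of the circuit on input `x`. -/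
def eval {m : ℕ} (C : Circuit m) (x : Fin m → Bool) : Bool :=
  C.wire x (m + C.out.val) (by omega)

end Circuit

/-- One run of a space-`s` communication protocol given by transition functions
`A, B : {0,1}^n × {0,1}^s → {0,1}^s ⊕ {0,1}` on inputs `x, y`: the `s`-bit shared memory
starts all zeros, Alice and Bob alternate turns starting with Alice, and on a turn the
active player either rewrites the shared memory or halts with an output bit, as a function
of their own input and the current memory contents only.  `protoRun A B x y t` is the
state after `t` turns: either `Sum.inl` of the current memory contents, or `Sum.inr` of
the output bit if the protocol has halted (halting is absorbing). -/
def protoRun {n s : ℕ} (A B : (Fin n → Bool) → (Fin s → Bool) → (Fin s → Bool) ⊕ Bool)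
    (x y : Fin n → Bool) : ℕ → (Fin s → Bool) ⊕ Bool
  | 0 => Sum.inl (fun _ => false)
  | t + 1 =>
    match protoRun A B x y t with
    | Sum.inr z => Sum.inr z
    | Sum.inl mem => if t % 2 = 0 then A x mem else B y mem

/-- The protocol `(A, B)` computes `f` if on every input pair `(x, y)` it eventually
halts with output `f (x, y)`. -/
def ProtoComputes {n s : ℕ} (A B : (Fin n → Bool) → (Fin s → Bool) → (Fin s → Bool) ⊕ Bool)
    (f : (Fin n → Bool) × (Fin n → Bool) → Bool) : Prop :=
  ∀ x y : Fin n → Bool, ∃ t : ℕ, protoRun A B x y t = Sum.inr (f (x, y))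

/-- The `2n`-bit input obtained by concatenating `x` and `y`. -/
def joinInput {n : ℕ} (x y : Fin n → Bool) : Fin (2 * n) → Bool := fun i =>
  if h : (i : ℕ) < n then x ⟨i, h⟩ else y ⟨(i : ℕ) - n, by have := i.isLt; omega⟩

/-!
A protocol that halts at all halts within `2 (2^s + 2)` turns: that is the number of
configurations (whose turn it is, memory contents or output), and a shortest halting run visits
no configuration twice.

The circuit follows the run turn by turn, with a wire for each indicator
`[state after t turns = σ]`. A turn maps these to the next through the indicators
`[the player to move sends σ to σ']`; each depends on the mover's `n` input bits only, so it is a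
DNF of `O(n 2^n)` gates, and the `O(4^s)` of them are built once. A turn then costs `O(4^s)` gates,
for a total of `O(n 2^(n+2s) + 8^s)`, which is `O(n 2^(n+2s))` as `s ≤ n`.
-/

def GateLabel.eval : GateLabel → Bool → Bool → Bool
  | .and, u, v => u && v
  | .or, u, v => u || v
  | .not, u, _ => !u

namespace Circuit

variable {m : ℕ}

/-- `wire` made total (`false` out of range), so that wire indices can be rewritten freely. -/
def value (C : Circuit m) (x : Fin m → Bool) (w : ℕ) : Bool :=
  if h : w < m + C.size then C.wire x w h else false

theorem value_input (C : Circuit m) (x : Fin m → Bool) (i : Fin m) : C.value x i = x i := by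
  rw [value, dif_pos (by omega), wire, dif_pos i.isLt]

theorem value_gate (C : Circuit m) (x : Fin m → Bool) (g : Fin C.size) :
    C.value x (m + g) = (C.label g).eval (C.value x (C.in1 g)) (C.value x (C.in2 g)) := by
  obtain ⟨w, hw, hg, rfl⟩ :
      ∃ w, ∃ _ : m ≤ w, ∃ hg : w - m < C.size, g = ⟨w - m, hg⟩ :=
    ⟨m + g, by omega, by simp, by simp⟩
  have h1 := (C.in1 ⟨w - m, hg⟩).isLt
  have h2 := (C.in2 ⟨w - m, hg⟩).isLt
  simp only [Fin.val_mk] at h1 h2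
  simp only [Nat.add_sub_cancel' hw]
  rw [value, dif_pos (by omega), wire, dif_neg (by omega)]
  simp only [value, dif_pos (show (C.in1 ⟨w - m, hg⟩ : ℕ) < m + C.size by omega),
    dif_pos (show (C.in2 ⟨w - m, hg⟩ : ℕ) < m + C.size by omega)]
  cases C.label _ <;> rfl

theorem eval_eq_value (C : Circuit m) (x : Fin m → Bool) :
    C.eval x = C.value x (m + C.out) := by
  rw [eval, value, dif_pos (by omega)]

def addGate (C : Circuit m) (l : GateLabel) (a b : Fin (m + C.size)) : Circuit m where
  size := C.size + 1
  label := Fin.lastCases l C.label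
  in1 := Fin.lastCases (motive := fun g => Fin (m + g)) a C.in1
  in2 := Fin.lastCases (motive := fun g => Fin (m + g)) b C.in2
  out := Fin.last _

section addGate

variable (C : Circuit m) (l : GateLabel) (a b : Fin (m + C.size)) (x : Fin m → Bool)

theorem value_addGate_of_lt {w : ℕ} (hw : w < m + C.size) :
    (C.addGate l a b).value x w = C.value x w := by
  induction w using Nat.strong_induction_on with
  | _ w ih =>
    obtain hwm | ⟨g, rfl⟩ : w < m ∨ ∃ g : Fin C.size, w = m + g :=
      if h : w < m then .inl h
      else .inr ⟨⟨w - m, by omega⟩, (Nat.add_sub_cancel' (not_lt.mp h)).symm⟩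
    · exact (value_input _ x ⟨w, hwm⟩).trans (value_input C x ⟨w, hwm⟩).symm
    · have h1 := (C.in1 g).isLt
      have h2 := (C.in2 g).isLt
      rw [value_gate C, ← ih _ (by omega) (by omega), ← ih _ (by omega) (by omega)]
      simpa [addGate] using value_gate (C.addGate l a b) x g.castSucc

theorem value_addGate_last :
    (C.addGate l a b).value x (m + C.size) = l.eval (C.value x a) (C.value x b) := by
  rw [← value_addGate_of_lt C l a b x a.isLt, ← value_addGate_of_lt C l a b x b.isLt]
  simpa [addGate] using value_gate (C.addGate l a b) x (Fin.last _)

theorem eval_addGate : (C.addGate l a b).eval x = l.eval (C.value x a) (C.value x b) :=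
  (eval_eq_value _ x).trans (value_addGate_last C l a b x)

end addGate

instance : Preorder (Circuit m) where
  le C C' := C.size ≤ C'.size ∧ ∀ x w, w < m + C.size → C'.value x w = C.value x w
  le_refl _ := ⟨le_rfl, fun _ _ _ => rfl⟩
  le_trans _ _ _ h₁₂ h₂₃ := ⟨h₁₂.1.trans h₂₃.1, fun x w hw =>
    (h₂₃.2 x w (by have := h₁₂.1; omega)).trans (h₁₂.2 x w hw)⟩

theorem le_addGate (C : Circuit m) (l : GateLabel) (a b : Fin (m + C.size)) :
    C ≤ C.addGate l a b :=
  ⟨Nat.le_succ _, fun x _ hw => value_addGate_of_lt C l a b x hw⟩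

def Carries (C : Circuit m) (g : (Fin m → Bool) → Bool) : Prop :=
  ∃ w : Fin (m + C.size), ∀ x, C.value x w = g x

theorem Carries.mono {C C' : Circuit m} {g : (Fin m → Bool) → Bool} (h : C.Carries g)
    (hle : C ≤ C') : C'.Carries g := by
  obtain ⟨w, hw⟩ := h
  exact ⟨⟨w, by have := hle.1; omega⟩, fun x => (hle.2 x w w.isLt).trans (hw x)⟩

theorem carries_input (C : Circuit m) (i : Fin m) : C.Carries fun x => x i :=
  ⟨⟨i, by omega⟩, fun x => value_input C x i⟩

theorem carries_addGate (C : Circuit m) (l : GateLabel) (a b : Fin (m + C.size)) :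
    (C.addGate l a b).Carries fun x => l.eval (C.value x a) (C.value x b) :=
  ⟨⟨m + C.size, by simp [addGate]⟩, value_addGate_last C l a b⟩

theorem exists_eval_eq_of_carries {C : Circuit m} {g : (Fin m → Bool) → Bool}
    (h : C.Carries g) : ∃ C' : Circuit m, C'.size = C.size + 1 ∧ ∀ x, C'.eval x = g x := by
  obtain ⟨w, hw⟩ := h
  exact ⟨C.addGate .and w w, rfl, fun x => by simp [eval_addGate, GateLabel.eval, hw]⟩

theorem exists_carries_not_input (i : Fin m) :
    ∃ C : Circuit m, C.size = 1 ∧ C.Carries fun x => !x i := by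
  refine ⟨{ size := 1, label _ := .not, in1 _ := Fin.castAdd _ i, in2 _ := Fin.castAdd _ i
            out := 0 }, rfl, ⟨m, by simp⟩, fun x => ?_⟩
  exact (value_gate _ x 0).trans (congrArg (!·) (value_input _ x i))

def Builds (S : Set ((Fin m → Bool) → Bool)) (k : ℕ) (T : Set ((Fin m → Bool) → Bool)) :
    Prop :=
  ∀ C : Circuit m, (∀ g ∈ S, C.Carries g) →
    ∃ C', C ≤ C' ∧ C'.size ≤ C.size + k ∧ ∀ g ∈ T, C'.Carries g

section Builds

variable {S S' T T' U : Set ((Fin m → Bool) → Bool)} {k k' : ℕ}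

theorem Builds.mono (h : Builds S k T) (hS : S ⊆ S') (hk : k ≤ k') (hT : T' ⊆ T) :
    Builds S' k' T' := fun C hC => by
  obtain ⟨C', hle, hsize, hT'⟩ := h C fun g hg => hC g (hS hg)
  exact ⟨C', hle, by omega, fun g hg => hT' g (hT hg)⟩

theorem builds_of_subset (h : T ⊆ S) : Builds S 0 T :=
  fun C hC => ⟨C, le_rfl, le_rfl, fun g hg => hC g (h hg)⟩

theorem Builds.union_self (h : Builds S k T) : Builds S k (S ∪ T) := fun C hC => by
  obtain ⟨C', hle, hsize, hT⟩ := h C hC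
  exact ⟨C', hle, hsize, fun g hg => hg.elim (fun hS => (hC g hS).mono hle) (hT g)⟩

theorem Builds.trans (h : Builds S k T) (h' : Builds T k' U) : Builds S (k + k') U :=
  fun C hC => by
  obtain ⟨C₁, hle₁, hsize₁, hT⟩ := h C hC
  obtain ⟨C₂, hle₂, hsize₂, hU⟩ := h' C₁ hT
  exact ⟨C₂, hle₁.trans hle₂, by omega, hU⟩

theorem Builds.union (h : Builds S k T) (h' : Builds S k' U) : Builds S (k + k') (T ∪ U) :=
  (h.union_self.trans (h'.mono Set.subset_union_left le_rfl subset_rfl).union_self).mono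
    subset_rfl le_rfl (Set.union_subset_union_left _ Set.subset_union_right)

theorem builds_biUnion {ι : Type*} (s : Finset ι) {T : ι → Set ((Fin m → Bool) → Bool)}
    (h : ∀ i ∈ s, Builds S k (T i)) : Builds S (s.card * k) (⋃ i ∈ s, T i) := by
  classical
  induction s using Finset.induction_on with
  | empty => simpa using builds_of_subset (Set.empty_subset S)
  | insert a s ha ih =>
    rw [Finset.card_insert_of_notMem ha, Finset.set_biUnion_insert, add_mul, one_mul, add_comm]
    exact (h a (Finset.mem_insert_self a s)).union
      (ih fun i hi => h i (Finset.mem_insert_of_mem hi))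

theorem builds_range {ι : Type*} [Fintype ι] {G : ι → (Fin m → Bool) → Bool}
    (h : ∀ i, Builds S k {G i}) : Builds S (Fintype.card ι * k) (Set.range G) := by
  have h_univ := builds_biUnion Finset.univ fun i _ => h i
  rwa [Finset.card_univ, show (⋃ i ∈ Finset.univ, {G i}) = Set.range G by ext; simp] at h_univ

theorem builds_gate (l : GateLabel) (g h : (Fin m → Bool) → Bool) :
    Builds {g, h} 1 {fun x => l.eval (g x) (h x)} := fun C hC => by
  obtain ⟨a, ha⟩ := hC g (by simp)
  obtain ⟨b, hb⟩ := hC h (by simp)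
  refine ⟨C.addGate l a b, le_addGate C l a b, le_rfl, ?_⟩
  simpa [ha, hb] using carries_addGate C l a b

theorem Builds.of_union_inputs (h : Builds (S ∪ Set.range Function.eval) k T) :
    Builds S k T :=
  fun C hC => h C fun g hg => hg.elim (hC g) fun ⟨i, hi⟩ => hi ▸ carries_input C i

theorem builds_any {ι : Type*} (s : Finset ι) (G : ι → (Fin m → Bool) → Bool) :
    Builds (insert (fun _ => false) (G '' s)) s.card {fun x => decide (∃ i ∈ s, G i x)} := by
  classical
  induction s using Finset.induction_on with
  | empty => simpa using builds_of_subset (subset_refl {fun (_ : Fin m → Bool) => false})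
  | insert a s ha ih =>
    have h_or := (builds_gate .or (G a) fun x => decide (∃ i ∈ s, G i x)).mono
      (S' := insert (fun _ => false) (G '' ↑(insert a s)) ∪
        {fun x => decide (∃ i ∈ s, G i x)})
      (T' := {fun x => decide (∃ i ∈ insert a s, G i x)})
      (by grind) le_rfl (by simp [GateLabel.eval, or_and_right, exists_or])
    rw [Finset.card_insert_of_notMem ha]
    exact (ih.mono (by grind) le_rfl subset_rfl).union_self.trans h_or

end Builds

theorem exists_carries_constants (hm : 0 < m) :
    ∃ C : Circuit m, C.size ≤ 3 ∧ C.Carries (fun _ => true) ∧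
      C.Carries (fun _ => false) := by
  let i : Fin m := ⟨0, hm⟩
  obtain ⟨C, hsize, hC⟩ := exists_carries_not_input i
  have h_false : Builds {fun x => x i, fun x => !x i} 1 {fun _ => false} :=
    (builds_gate .and _ _).mono subset_rfl le_rfl (by simp [GateLabel.eval])
  have h_true : Builds {fun _ => false} 1 {fun (_ : Fin m → Bool) => true} :=
    (builds_gate .not (fun _ => false) (fun _ => false)).mono (by simp) le_rfl
      (by simp [GateLabel.eval])
  obtain ⟨C', -, hsize', hC'⟩ := h_false.union_self.trans
    (h_true.mono Set.subset_union_right le_rfl subset_rfl).union_self C (by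
      simpa using ⟨carries_input C i, hC⟩)
  exact ⟨C', by omega, hC' _ (by simp), hC' _ (by simp)⟩

theorem builds_minterms {k : ℕ} (v : Fin k → (Fin m → Bool) → Bool) :
    Builds (insert (fun _ => false) (Set.range v)) (k + 2 ^ k * (k + 1))
      (Set.range fun (a : Fin k → Bool) x => decide (∀ i, v i x = a i)) := by
  have h_neg : Builds (Set.range v) k (Set.range fun i x => !v i x) := by
    simpa using builds_range fun i =>
      (builds_gate .not (v i) (v i)).mono (by simp) le_rfl (by simp [GateLabel.eval])
  have h_minterm (a : Fin k → Bool) :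
      Builds (insert (fun _ => false) (Set.range v) ∪ Set.range fun i x => !v i x) (k + 1)
        {fun x => decide (∀ i, v i x = a i)} := by
    -- the minterm of `a` is the negated disjunction of the literals that disagree with `a`
    have h_mismatch := builds_any Finset.univ fun i x => v i x != a i
    have h_not := builds_gate .not (fun x => decide (∃ i ∈ Finset.univ, (v i x != a i) = true))
      (fun x => decide (∃ i ∈ Finset.univ, (v i x != a i) = true))
    refine (h_mismatch.mono ?_ (by simp) subset_rfl).trans (h_not.mono (by simp) le_rfl ?_)
    · rintro g (rfl | ⟨i, -, rfl⟩)
      · exact .inl (.inl rfl)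
      · cases ha : a i
        · exact .inl (.inr ⟨i, by simp [ha]⟩)
        · exact .inr ⟨i, by simp [ha]⟩
    · simp [GateLabel.eval, ← decide_not]
  have h_minterms := builds_range h_minterm
  rw [Fintype.card_fun, Fintype.card_bool, Fintype.card_fin] at h_minterms
  exact (h_neg.mono (Set.subset_insert _ _) le_rfl subset_rfl).union_self.trans h_minterms

theorem builds_truthTable {k : ℕ} (v : Fin k → (Fin m → Bool) → Bool)
    (h : (Fin k → Bool) → Bool) :
    Builds (insert (fun _ => false) (Set.range v)) ((k + 3) * 2 ^ k)
      {fun x => h fun i => v i x} := by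
  classical
  have h_dnf := builds_any (Finset.univ.filter (h · = true))
    fun a x => decide (∀ i, v i x = a i)
  have h_card : (Finset.univ.filter (h · = true)).card ≤ 2 ^ k := by
    simpa using Finset.card_filter_le Finset.univ (h · = true)
  have hk : k < 2 ^ k := Nat.lt_two_pow_self
  refine ((builds_minterms v).union_self.trans (h_dnf.mono ?_ h_card ?_)).mono
    subset_rfl (by nlinarith) subset_rfl
  · rintro g (rfl | ⟨a, -, rfl⟩)
    · exact .inl (.inl rfl)
    · exact .inr ⟨a, rfl⟩
  · refine Set.singleton_subset_singleton.mpr (funext fun x => ?_)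
    rw [Bool.eq_iff_iff, decide_eq_true_iff]
    simp only [Finset.mem_filter, Finset.mem_univ, true_and, decide_eq_true_eq]
    exact ⟨fun hx => ⟨_, hx, fun _ => rfl⟩, fun ⟨a, ha, hv⟩ => funext hv ▸ ha⟩

end Circuit

theorem Function.exists_lt_card_iterate_eq {α : Type*} [Fintype α] (f : α → α) {x y : α}
    {t : ℕ} (h : f^[t] x = y) : ∃ t' < Fintype.card α, f^[t'] x = y := by
  classical
  have hex : ∃ t, f^[t] x = y := ⟨t, h⟩
  refine ⟨Nat.find hex, ?_, Nat.find_spec hex⟩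
  by_contra! hcard
  obtain ⟨i, j, hij, heq⟩ := Fintype.exists_ne_map_eq_of_card_lt
    (fun i : Fin (Nat.find hex + 1) => f^[i] x) (by simpa using Nat.lt_succ_of_le hcard)
  wlog hlt : i < j generalizing i j
  · exact this j i hij.symm heq.symm (lt_of_le_of_ne (not_lt.mp hlt) hij.symm)
  have hj := j.isLt
  -- the stretch of the orbit between the repeated points `f^[i] x = f^[j] x` can be cut out
  have hshort : f^[Nat.find hex - (j - i)] x = y :=
    calc f^[Nat.find hex - (j - i)] x = f^[Nat.find hex - j] (f^[i] x) := by
          rw [← Function.iterate_add_apply]; congr 1; omega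
      _ = f^[Nat.find hex - j] (f^[j] x) := congrArg _ heq
      _ = y := by
          rw [← Function.iterate_add_apply, Nat.sub_add_cancel (by omega)]
          exact Nat.find_spec hex
  exact Nat.find_min hex (by omega) hshort

section Protocol

variable {n s : ℕ} (A B : (Fin n → Bool) → (Fin s → Bool) → (Fin s → Bool) ⊕ Bool)

/-- The move of the player to act, who holds the input `u`; `p` says whether it is Alice. -/
def protoMove (p : Bool) (u : Fin n → Bool) :
    (Fin s → Bool) ⊕ Bool → (Fin s → Bool) ⊕ Bool
  | .inl mem => if p then A u mem else B u mem
  | .inr b => .inr b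

theorem protoRun_succ (x y : Fin n → Bool) (t : ℕ) :
    protoRun A B x y (t + 1) =
      protoMove A B (t % 2 = 0) (if t % 2 = 0 then x else y) (protoRun A B x y t) := by
  rw [protoRun]
  cases protoRun A B x y t <;> by_cases ht : t % 2 = 0 <;> simp [protoMove, ht]

theorem protoRun_add_of_eq_inr {x y : Fin n → Bool} {t : ℕ} {b : Bool}
    (h : protoRun A B x y t = .inr b) (k : ℕ) : protoRun A B x y (t + k) = .inr b := by
  induction k with
  | zero => exact h
  | succ k ih => rw [← add_assoc, protoRun_succ, ih, protoMove]

/-- One turn, acting on configurations (whether it is Alice's turn, state). -/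
def protoConfigStep (x y : Fin n → Bool) (c : Bool × ((Fin s → Bool) ⊕ Bool)) :
    Bool × ((Fin s → Bool) ⊕ Bool) :=
  (!c.1, protoMove A B c.1 (if c.1 then x else y) c.2)

theorem iterate_protoConfigStep (x y : Fin n → Bool) (t : ℕ) :
    (protoConfigStep A B x y)^[t] (true, .inl fun _ => false) =
      (decide (t % 2 = 0), protoRun A B x y t) := by
  induction t with
  | zero => rfl
  | succ t ih =>
    rw [Function.iterate_succ_apply', ih, protoConfigStep, protoRun_succ]
    by_cases ht : t % 2 = 0 <;> simp [ht] <;> omega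

theorem protoRun_eq_inr_of_eq_inr {x y : Fin n → Bool} {t : ℕ} {b : Bool}
    (h : protoRun A B x y t = .inr b) : protoRun A B x y (2 * (2 ^ s + 2)) = .inr b := by
  have hconfig := iterate_protoConfigStep A B x y t
  rw [h] at hconfig
  obtain ⟨t', ht', hconfig'⟩ := Function.exists_lt_card_iterate_eq _ hconfig
  rw [iterate_protoConfigStep, Prod.ext_iff] at hconfig'
  have hcard : Fintype.card (Bool × ((Fin s → Bool) ⊕ Bool)) = 2 * (2 ^ s + 2) := by simp
  simpa [hcard, show t' + (2 * (2 ^ s + 2) - t') = 2 * (2 ^ s + 2) by omega] using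
    protoRun_add_of_eq_inr A B hconfig'.2 (2 * (2 ^ s + 2) - t')

end Protocol

section Simulation

open Circuit

variable {n s : ℕ} (A B : (Fin n → Bool) → (Fin s → Bool) → (Fin s → Bool) ⊕ Bool)

/-- Alice's half (`p = true`) or Bob's half (`p = false`) of a `2n`-bit input. -/
def half (p : Bool) (z : Fin (2 * n) → Bool) : Fin n → Bool :=
  fun i => z ⟨if p then i else n + i, by split <;> omega⟩

theorem half_true_joinInput (x y : Fin n → Bool) : half true (joinInput x y) = x := by
  funext i
  simp [half, joinInput]

theorem half_false_joinInput (x y : Fin n → Bool) : half false (joinInput x y) = y := by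
  funext i
  simp [half, joinInput]

def runIndicator (t : ℕ) (σ : (Fin s → Bool) ⊕ Bool) : (Fin (2 * n) → Bool) → Bool :=
  fun z => decide (protoRun A B (half true z) (half false z) t = σ)

def moveIndicator (c : Bool × ((Fin s → Bool) ⊕ Bool) × ((Fin s → Bool) ⊕ Bool)) :
    (Fin (2 * n) → Bool) → Bool :=
  fun z => decide (protoMove A B c.1 (half c.1 z) c.2.1 = c.2.2)

theorem runIndicator_succ (t : ℕ) (σ' : (Fin s → Bool) ⊕ Bool) (z : Fin (2 * n) → Bool) :
    runIndicator A B (t + 1) σ' z =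
      decide (∃ σ, runIndicator A B t σ z && moveIndicator A B (t % 2 = 0, σ, σ') z) := by
  by_cases ht : t % 2 = 0 <;> simp [runIndicator, moveIndicator, protoRun_succ, ht]

theorem builds_moveIndicators :
    Builds {fun _ => false} (2 * (2 ^ s + 2) ^ 2 * ((n + 3) * 2 ^ n))
      (Set.range (moveIndicator A B)) := by
  have h_each (c : Bool × ((Fin s → Bool) ⊕ Bool) × ((Fin s → Bool) ⊕ Bool)) :
      Builds {fun _ => false} ((n + 3) * 2 ^ n) {moveIndicator A B c} := by
    refine Builds.of_union_inputs ((builds_truthTable (fun i z => half c.1 z i)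
      fun u => decide (protoMove A B c.1 u c.2.1 = c.2.2)).mono ?_ le_rfl subset_rfl)
    rintro g (rfl | ⟨i, rfl⟩)
    · exact .inl rfl
    · exact .inr ⟨_, rfl⟩
  simpa [sq, mul_assoc] using builds_range h_each

theorem builds_runIndicator_succ (t : ℕ) :
    Builds (insert (fun _ => false) (Set.range (moveIndicator A B)) ∪
        Set.range (runIndicator A B t))
      (2 * (2 ^ s + 2) ^ 2) (Set.range (runIndicator A B (t + 1))) := by
  have h_each (σ' : (Fin s → Bool) ⊕ Bool) :
      Builds (insert (fun _ => false) (Set.range (moveIndicator A B)) ∪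
        Set.range (runIndicator A B t)) (2 * (2 ^ s + 2)) {runIndicator A B (t + 1) σ'} := by
    have h_and := builds_range fun σ => (builds_gate .and (runIndicator A B t σ)
      (moveIndicator A B (t % 2 = 0, σ, σ'))).mono
        (S' := insert (fun _ => false) (Set.range (moveIndicator A B)) ∪
          Set.range (runIndicator A B t))
        (Set.insert_subset_iff.mpr
          ⟨.inr ⟨σ, rfl⟩, Set.singleton_subset_iff.mpr (.inl (.inr ⟨_, rfl⟩))⟩)
        le_rfl subset_rfl
    have h_or := builds_any Finset.univ fun σ z =>
      runIndicator A B t σ z && moveIndicator A B (t % 2 = 0, σ, σ') z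
    refine (h_and.union_self.trans (h_or.mono ?_ le_rfl ?_)).mono subset_rfl (by
      simp only [Finset.card_univ, Fintype.card_sum, Fintype.card_fun, Fintype.card_bool,
        Fintype.card_fin]
      omega) subset_rfl
    · rintro g (rfl | ⟨σ, -, rfl⟩)
      · exact .inl (.inl (.inl rfl))
      · exact .inr ⟨σ, rfl⟩
    · refine Set.singleton_subset_singleton.mpr (funext fun z => ?_)
      rw [runIndicator_succ]
      simp only [Finset.mem_univ, true_and]
  simpa [sq, mul_assoc, mul_comm, mul_left_comm] using builds_range h_each

theorem builds_runIndicator (t : ℕ) :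
    Builds {fun _ => true, fun _ => false}
      (2 * (2 ^ s + 2) ^ 2 * ((n + 3) * 2 ^ n) + t * (2 * (2 ^ s + 2) ^ 2))
      (Set.range (runIndicator A B t)) := by
  set S := {fun _ => true, fun _ => false} ∪ Set.range (moveIndicator A B)
  have h_init : Set.range (runIndicator A B 0) ⊆ {fun _ => true, fun _ => false} := by
    rintro _ ⟨σ, rfl⟩
    by_cases hσ : Sum.inl (fun _ => false) = σ
    · exact .inl (funext fun _ => decide_eq_true hσ)
    · exact .inr (funext fun _ => decide_eq_false hσ)
  have h_layers (t : ℕ) :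
      Builds S (t * (2 * (2 ^ s + 2) ^ 2)) (S ∪ Set.range (runIndicator A B t)) := by
    induction t with
    | zero =>
      rw [zero_mul]
      exact builds_of_subset (Set.union_subset subset_rfl (h_init.trans Set.subset_union_left))
    | succ t ih =>
      have h_layer := ((builds_runIndicator_succ A B t).mono
        (S' := S ∪ Set.range (runIndicator A B t)) (by grind) le_rfl subset_rfl).union_self
      exact (ih.trans h_layer).mono subset_rfl (by rw [add_one_mul]) (by grind)
  exact ((builds_moveIndicators A B).mono (by simp) le_rfl subset_rfl).union_self.trans
    (h_layers t) |>.mono subset_rfl le_rfl Set.subset_union_right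

theorem exists_circuit_eval_eq_runIndicator (hn : 0 < n) (t : ℕ) :
    ∃ C : Circuit (2 * n), C.size ≤
        4 + 2 * (2 ^ s + 2) ^ 2 * ((n + 3) * 2 ^ n) + t * (2 * (2 ^ s + 2) ^ 2) ∧
      ∀ z, C.eval z = runIndicator A B t (.inr true) z := by
  obtain ⟨C₀, hsize₀, htrue, hfalse⟩ := exists_carries_constants (m := 2 * n) (by omega)
  obtain ⟨C₁, -, hsize₁, hC₁⟩ := builds_runIndicator A B t C₀ (by simp [htrue, hfalse])
  obtain ⟨C, hsize, hC⟩ := exists_eval_eq_of_carries (hC₁ _ ⟨.inr true, rfl⟩)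
  exact ⟨C, by omega, hC⟩

end Simulation

theorem protocol_circuit_size_le {n s : ℕ} (hn : 1 ≤ n) (hs : 1 ≤ s) (hsn : s ≤ n) :
    4 + 2 * (2 ^ s + 2) ^ 2 * ((n + 3) * 2 ^ n) + 2 * (2 ^ s + 2) * (2 * (2 ^ s + 2) ^ 2) ≤
      68 * n * 2 ^ (n + 2 * s) := by
  have hP : 2 ≤ 2 ^ s := Nat.le_self_pow (by omega) 2
  have hPQ : 2 ^ s ≤ 2 ^ n := Nat.pow_le_pow_right (by norm_num) hsn
  rw [pow_add, pow_mul']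
  set P := 2 ^ s
  set Q := 2 ^ n
  have h_moves : 2 * (P + 2) ^ 2 * ((n + 3) * Q) ≤ 32 * n * Q * P ^ 2 :=
    calc 2 * (P + 2) ^ 2 * ((n + 3) * Q) ≤ 2 * (2 * P) ^ 2 * ((4 * n) * Q) := by
          gcongr <;> omega
      _ = 32 * n * Q * P ^ 2 := by ring
  have h_layers : 2 * (P + 2) * (2 * (P + 2) ^ 2) ≤ 32 * n * Q * P ^ 2 :=
    calc 2 * (P + 2) * (2 * (P + 2) ^ 2) ≤ 2 * (2 * P) * (2 * (2 * P) ^ 2) := by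
          gcongr <;> omega
      _ = 32 * P * P ^ 2 := by ring
      _ ≤ 32 * n * Q * P ^ 2 := by rw [mul_assoc 32 n]; gcongr; nlinarith
  have h_one : 1 ≤ n * Q * P ^ 2 := Nat.one_le_iff_ne_zero.mpr (by positivity)
  nlinarith

/-- There is an absolute constant `c` such that for all `n ≥ 1` and `1 ≤ s ≤ n`, every
function `f : {0,1}^n × {0,1}^n → {0,1}` computed by a space-`s` communication protocol
is computed by a Boolean circuit with `2n` inputs of size at most `c · n · 2^(n + 2s)`. -/
theorem space_protocol_to_circuit : ∃ c : ℕ, ∀ n s : ℕ, 1 ≤ n → 1 ≤ s → s ≤ n →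
    ∀ f : (Fin n → Bool) × (Fin n → Bool) → Bool,
      (∃ A B : (Fin n → Bool) → (Fin s → Bool) → (Fin s → Bool) ⊕ Bool,
        ProtoComputes A B f) →
      ∃ C : Circuit (2 * n), C.size ≤ c * n * 2 ^ (n + 2 * s) ∧
        ∀ x y : Fin n → Bool, C.eval (joinInput x y) = f (x, y) := by
  refine ⟨68, fun n s hn hs hsn f ⟨A, B, hAB⟩ => ?_⟩
  obtain ⟨C, hsize, hC⟩ := exists_circuit_eval_eq_runIndicator A B hn (2 * (2 ^ s + 2))
  refine ⟨C, hsize.trans (protocol_circuit_size_le hn hs hsn), fun x y => ?_⟩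
  obtain ⟨t, ht⟩ := hAB x y
  rw [hC, runIndicator, half_true_joinInput, half_false_joinInput,
    protoRun_eq_inr_of_eq_inr A B ht]
  cases f (x, y) <;> rfl
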